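/- arXiv:1603.02388 — 2 statements merged into one kernel-verified Lean document; each statement's English description precedes it below -/
import Mathlib

section
/- Let T, M, n be positive natural numbers, let Y be a T×n complex matrix and S a T×M complex matrix, and let 1 ≤ i ≤ T. Let S₁ denote the i×M matrix formed by the first i rows of S and Y₁ the i×n matrix formed by the first i rows of Y. If both S*S and S₁*S₁ are invertible, then ‖Y₁ − S₁(S₁*S₁)⁻¹S₁*Y₁‖² ≤ ‖Y − S(S*S)⁻¹S*Y‖², i.e., the residual energy after orthogonally projecting the columns of the truncated matrix Y₁ onto the column space of the truncated matrix S₁ is no bigger than the residual energy after orthogonally projecting the columns of Y onto the column space of S. -/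
open Matrix

/-- Squared Frobenius norm of a complex matrix: `‖A‖² = tr(AᴴA)` (a real number). -/
noncomputable def frobSq {m n : ℕ} (A : Matrix (Fin m) (Fin n) ℂ) : ℝ :=
  (Matrix.trace (Aᴴ * A)).re

lemma frobSq_eq_sum {m n : ℕ} (A : Matrix (Fin m) (Fin n) ℂ) :
    frobSq A = ∑ j, ∑ k, Complex.normSq (A k j) := by
  simp [frobSq, Matrix.trace, Matrix.mul_apply, Matrix.conjTranspose_apply,
    Matrix.diag, Complex.re_sum, Complex.normSq_apply, Complex.mul_re]

lemma frobSq_nonneg {m n : ℕ} (A : Matrix (Fin m) (Fin n) ℂ) : 0 ≤ frobSq A := by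
  rw [frobSq_eq_sum]
  exact Finset.sum_nonneg fun j _ => Finset.sum_nonneg fun k _ => Complex.normSq_nonneg _

lemma frobSq_add_of_orth {m n : ℕ} (R E : Matrix (Fin m) (Fin n) ℂ)
    (h : Rᴴ * E = 0) : frobSq (R + E) = frobSq R + frobSq E := by
  have h2 : Eᴴ * R = 0 := by
    have := congrArg conjTranspose h
    simpa [Matrix.conjTranspose_mul] using this
  unfold frobSq
  rw [Matrix.conjTranspose_add, Matrix.add_mul, Matrix.mul_add, Matrix.mul_add,
    h, h2]
  simp [Matrix.trace_add]

/-- Least squares optimality of the orthogonal projection. -/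
lemma residual_le {m M n : ℕ} (Y : Matrix (Fin m) (Fin n) ℂ)
    (S : Matrix (Fin m) (Fin M) ℂ) (hS : IsUnit (Sᴴ * S))
    (X : Matrix (Fin M) (Fin n) ℂ) :
    frobSq (Y - S * (Sᴴ * S)⁻¹ * Sᴴ * Y) ≤ frobSq (Y - S * X) := by
  set R := Y - S * (Sᴴ * S)⁻¹ * Sᴴ * Y with hR
  have hdet : IsUnit (Sᴴ * S).det := (Matrix.isUnit_iff_isUnit_det _).1 hS
  have hinv : (Sᴴ * S) * (Sᴴ * S)⁻¹ = 1 := Matrix.mul_nonsing_inv _ hdet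
  have hSR : Sᴴ * R = 0 := by
    rw [hR, Matrix.mul_sub]
    have : Sᴴ * (S * (Sᴴ * S)⁻¹ * Sᴴ * Y) = Sᴴ * Y := by
      calc Sᴴ * (S * (Sᴴ * S)⁻¹ * Sᴴ * Y) = ((Sᴴ * S) * (Sᴴ * S)⁻¹) * (Sᴴ * Y) := by
            simp only [Matrix.mul_assoc]
        _ = Sᴴ * Y := by rw [hinv, Matrix.one_mul]
    rw [this, sub_self]
  set E := S * ((Sᴴ * S)⁻¹ * Sᴴ * Y - X) with hE
  have hYX : Y - S * X = R + E := by
    rw [hR, hE, Matrix.mul_sub, ← Matrix.mul_assoc, ← Matrix.mul_assoc]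
    abel
  have horth : Rᴴ * E = 0 := by
    have : Rᴴ * E = (Sᴴ * R)ᴴ * ((Sᴴ * S)⁻¹ * Sᴴ * Y - X) := by
      rw [hE, ← Matrix.mul_assoc, Matrix.conjTranspose_mul,
        Matrix.conjTranspose_conjTranspose]
    rw [this, hSR]
    simp
  rw [hYX, frobSq_add_of_orth R E horth]
  have := frobSq_nonneg E
  linarith

/-- Truncating rows can only decrease the squared Frobenius norm. -/
lemma frobSq_submatrix_le {m m' n : ℕ} (h : m' ≤ m)
    (A : Matrix (Fin m) (Fin n) ℂ) :
    frobSq (A.submatrix (Fin.castLE h) id) ≤ frobSq A := by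
  rw [frobSq_eq_sum, frobSq_eq_sum]
  apply Finset.sum_le_sum
  intro k _
  have : ∑ j, Complex.normSq (A.submatrix (Fin.castLE h) id j k)
      = ∑ j ∈ Finset.univ.image (Fin.castLE h), Complex.normSq (A j k) := by
    rw [Finset.sum_image (by intro a _ b _ hab; exact Fin.castLE_injective h hab)]
    rfl
  rw [this]
  apply Finset.sum_le_sum_of_subset_of_nonneg (Finset.subset_univ _)
  intro j _ _
  exact Complex.normSq_nonneg _

/-- Lemma 1 of the paper: the projection residual energy of the
row-truncated matrices is no bigger than that of the full matrices. -/
theorem stmt_0 (T M n : ℕ) (hT : 0 < T) (hM : 0 < M) (hn : 0 < n)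
    (Y : Matrix (Fin T) (Fin n) ℂ) (S : Matrix (Fin T) (Fin M) ℂ)
    (i : ℕ) (hi1 : 1 ≤ i) (hi2 : i ≤ T)
    (S₁ : Matrix (Fin i) (Fin M) ℂ) (hS₁ : S₁ = S.submatrix (Fin.castLE hi2) id)
    (Y₁ : Matrix (Fin i) (Fin n) ℂ) (hY₁ : Y₁ = Y.submatrix (Fin.castLE hi2) id)
    (hS : IsUnit (Sᴴ * S)) (hS1 : IsUnit (S₁ᴴ * S₁)) :
    frobSq (Y₁ - S₁ * (S₁ᴴ * S₁)⁻¹ * S₁ᴴ * Y₁) ≤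
      frobSq (Y - S * (Sᴴ * S)⁻¹ * Sᴴ * Y) := by
  set X := (Sᴴ * S)⁻¹ * Sᴴ * Y with hX
  have step1 : frobSq (Y₁ - S₁ * (S₁ᴴ * S₁)⁻¹ * S₁ᴴ * Y₁) ≤ frobSq (Y₁ - S₁ * X) :=
    residual_le Y₁ S₁ hS1 X
  have hsub : Y₁ - S₁ * X = (Y - S * X).submatrix (Fin.castLE hi2) id := by
    subst hS₁ hY₁
    ext k j
    simp [Matrix.sub_apply, Matrix.submatrix_apply, Matrix.mul_apply]
  have step2 : frobSq (Y₁ - S₁ * X) ≤ frobSq (Y - S * X) := by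
    rw [hsub]; exact frobSq_submatrix_le hi2 _
  have : Y - S * X = Y - S * (Sᴴ * S)⁻¹ * Sᴴ * Y := by
    rw [hX, ← Matrix.mul_assoc, ← Matrix.mul_assoc]
  rw [this] at step2
  exact le_trans step1 step2
end

section
/- Let X be an N×T complex matrix, ρ a real number, and R a T×T complex matrix such that R*R = X*X − ρI. Let S be a T×M complex matrix with S*S invertible and set P = S(S*S)⁻¹S*. Then ‖X(I − P)‖² = ‖(I − P)R*‖² + ρ(T − M), where I is the T×T identity matrix. Consequently, minimizing ‖X(I − P_S)‖² over a family of T×M matrices S of full column rank M is equivalent to minimizing ‖R* − S(S*S)⁻¹S*R*‖² over that family. -/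
open Matrix

/-- if `RᴴR = XᴴX − ρI` then
`‖X(I − P)‖² = ‖(I − P)Rᴴ‖² + ρ(T − M)` for `P = S(SᴴS)⁻¹Sᴴ`. -/
theorem stmt_8 (N T M : ℕ)
    (X : Matrix (Fin N) (Fin T) ℂ) (ρ : ℝ)
    (R : Matrix (Fin T) (Fin T) ℂ)
    (hR : Rᴴ * R = Xᴴ * X - (ρ : ℂ) • (1 : Matrix (Fin T) (Fin T) ℂ))
    (S : Matrix (Fin T) (Fin M) ℂ) (hS : IsUnit (Sᴴ * S))
    (P : Matrix (Fin T) (Fin T) ℂ) (hP : P = S * (Sᴴ * S)⁻¹ * Sᴴ) :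
    frobSq (X * (1 - P)) = frobSq ((1 - P) * Rᴴ) + ρ * ((T : ℝ) - (M : ℝ)) := by
  have hdet : IsUnit (Sᴴ * S).det := (Matrix.isUnit_iff_isUnit_det _).mp hS
  have hinv : (Sᴴ * S)⁻¹ * (Sᴴ * S) = 1 := Matrix.nonsing_inv_mul _ hdet
  have hPH : Pᴴ = P := by
    rw [hP]
    simp [Matrix.conjTranspose_mul, Matrix.conjTranspose_nonsing_inv, Matrix.mul_assoc]
  have hPP : P * P = P := by
    rw [hP]
    calc S * (Sᴴ * S)⁻¹ * Sᴴ * (S * (Sᴴ * S)⁻¹ * Sᴴ)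
        = S * ((Sᴴ * S)⁻¹ * (Sᴴ * S)) * ((Sᴴ * S)⁻¹ * Sᴴ) := by
          simp only [Matrix.mul_assoc]
      _ = S * (Sᴴ * S)⁻¹ * Sᴴ := by rw [hinv]; simp [Matrix.mul_assoc]
  have hQQ : (1 - P) * (1 - P) = 1 - P := by
    simp [Matrix.mul_sub, Matrix.sub_mul, hPP]
  have hQH : (1 - P)ᴴ = 1 - P := by
    simp [Matrix.conjTranspose_sub, hPH]
  have trP : Matrix.trace P = (M : ℂ) := by
    rw [hP, Matrix.mul_assoc, Matrix.trace_mul_comm, Matrix.mul_assoc, hinv]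
    simp
  have key1 : Matrix.trace ((X * (1 - P))ᴴ * (X * (1 - P)))
      = Matrix.trace ((1 - P) * (Xᴴ * X)) := by
    rw [Matrix.conjTranspose_mul, hQH]
    rw [show (1 - P) * Xᴴ * (X * (1 - P)) = (1 - P) * (Xᴴ * (X * (1 - P))) from
      by rw [Matrix.mul_assoc]]
    rw [Matrix.trace_mul_comm]
    rw [show Xᴴ * (X * (1 - P)) * (1 - P) = Xᴴ * X * ((1 - P) * (1 - P)) from
      by simp only [Matrix.mul_assoc]]
    rw [hQQ, Matrix.trace_mul_comm]
  have key2 : Matrix.trace (((1 - P) * Rᴴ)ᴴ * ((1 - P) * Rᴴ))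
      = Matrix.trace ((1 - P) * (Rᴴ * R)) := by
    rw [Matrix.conjTranspose_mul, hQH, Matrix.conjTranspose_conjTranspose]
    rw [show R * (1 - P) * ((1 - P) * Rᴴ) = R * ((1 - P) * (1 - P)) * Rᴴ from
      by simp only [Matrix.mul_assoc]]
    rw [hQQ, Matrix.trace_mul_comm, ← Matrix.mul_assoc, Matrix.trace_mul_comm]
  have trQ : Matrix.trace (1 - P : Matrix (Fin T) (Fin T) ℂ) = (T : ℂ) - (M : ℂ) := by
    rw [Matrix.trace_sub, Matrix.trace_one, trP]
    simp
  have main : Matrix.trace ((1 - P) * (Xᴴ * X))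
      = Matrix.trace ((1 - P) * (Rᴴ * R)) + (ρ : ℂ) * ((T : ℂ) - (M : ℂ)) := by
    rw [hR, Matrix.mul_sub, Matrix.trace_sub, Matrix.mul_smul, Matrix.trace_smul,
      Matrix.mul_one, trQ, smul_eq_mul]
    ring
  unfold frobSq
  rw [key1, key2, main]
  simp
end
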